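/- Let R be a ring, let M be a right R-module of finite length, and let N ⊆ M be an isotypic submodule. Then there exists a submodule N' of M with N ⊆ N' such that N' is isotypic, N' is maximal among the isotypic submodules of M, and Hom_R(N', M/N') = {0}. -/

import Mathlib

universe u

open CategoryTheory

/-- `Ext¹_A(S, T) = 0`, formulated via the `Ext` functor on the category of `A`-modules.
Right `R`-modules are treated as modules over `A = Rᵐᵒᵖ`. -/
def Ext1IsZero (A : Type u) [Ring A] (S T : Type u) [AddCommGroup S] [Module A S]
    [AddCommGroup T] [Module A T] : Prop :=
  Subsingleton (((Ext ℤ (ModuleCat.{u} A) 1).obj (Opposite.op (ModuleCat.of A S))).obj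
    (ModuleCat.of A T))

/-- The endomorphism ring of the `A`-module `M` is a division ring:
it is nontrivial and every nonzero endomorphism is invertible. -/
def EndIsDivisionRing (A : Type*) [Ring A] (M : Type*) [AddCommGroup M] [Module A M] : Prop :=
  Nontrivial (Module.End A M) ∧ ∀ f : Module.End A M, f ≠ 0 → IsUnit f

/-- The `A`-module `M` is isotypic: all of its simple subquotients are isomorphic. -/
def IsIsotypicSubquot (A : Type*) [Ring A] (M : Type*) [AddCommGroup M] [Module A M] : Prop :=
  ∀ (p₁ p₂ : Submodule A M) (q₁ : Submodule A p₁) (q₂ : Submodule A p₂),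
    IsSimpleModule A (p₁ ⧸ q₁) → IsSimpleModule A (p₂ ⧸ q₂) →
      Nonempty ((p₁ ⧸ q₁) ≃ₗ[A] (p₂ ⧸ q₂))

/-! Take `N'` maximal among the isotypic submodules containing `N` (it exists since `M` is
Noetherian). A nonzero `f : N' → M/N'` would let us enlarge `N'` to the preimage `P` of `range f`.
A simple subquotient of `P` is a subquotient either of `N'` or of `P/N' ≅ range f`, which is a
quotient of `N'`; so `P` would still be isotypic, contradicting maximality. -/

def IsSubquotient (A : Type*) [Ring A] (W X : Type*) [AddCommGroup W] [Module A W]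
    [AddCommGroup X] [Module A X] : Prop :=
  ∃ (p : Submodule A W) (f : p →ₗ[A] X), Function.Surjective f

section Subquotient

variable {A : Type*} [Ring A] {U V W X : Type*} [AddCommGroup U] [Module A U]
  [AddCommGroup V] [Module A V] [AddCommGroup W] [Module A W] [AddCommGroup X] [Module A X]

theorem IsSubquotient.of_surjective (f : W →ₗ[A] X) (hf : Function.Surjective f) :
    IsSubquotient A W X :=
  ⟨⊤, f ∘ₗ (⊤ : Submodule A W).subtype, fun x ↦
    let ⟨w, hw⟩ := hf x; ⟨⟨w, Submodule.mem_top⟩, hw⟩⟩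

theorem IsSubquotient.map (h : IsSubquotient A U X) (g : U →ₗ[A] V)
    (hg : Function.Injective g) : IsSubquotient A V X := by
  obtain ⟨p, f, hf⟩ := h
  exact ⟨p.map g, f ∘ₗ (p.equivMapOfInjective g hg).symm.toLinearMap,
    hf.comp (LinearEquiv.surjective _)⟩

theorem IsSubquotient.comap (h : IsSubquotient A V X) (g : U →ₗ[A] V)
    (hg : Function.Surjective g) : IsSubquotient A U X := by
  obtain ⟨p, f, hf⟩ := h
  refine ⟨p.comap g, f ∘ₗ g.restrict fun _ hx ↦ hx, hf.comp fun y ↦ ?_⟩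
  obtain ⟨x, hx⟩ := hg y
  exact ⟨⟨x, by simp [hx]⟩, Subtype.ext hx⟩

/- For `f : p ↠ X`, either `p ∩ ker g` already maps onto the simple module `X`, or `f` kills it
and then factors through `g(p) ⊆ range g`. -/
theorem IsSubquotient.ker_or_range [IsSimpleModule A X] (h : IsSubquotient A W X)
    (g : W →ₗ[A] V) :
    IsSubquotient A (LinearMap.ker g) X ∨ IsSubquotient A (LinearMap.range g) X := by
  obtain ⟨p, f, hf⟩ := h
  set g' := g ∘ₗ p.subtype
  rcases (f ∘ₗ (LinearMap.ker g').subtype).surjective_or_eq_zero with hsurj | hzero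
  · refine .inl <| (IsSubquotient.of_surjective _ hsurj).map
      (LinearMap.codRestrict _ (p.subtype ∘ₗ (LinearMap.ker g').subtype) fun x ↦ x.2) ?_
    intro x y hxy
    have hval := congrArg Subtype.val hxy
    exact Subtype.ext (Subtype.ext hval)
  · have hle : LinearMap.ker g' ≤ LinearMap.ker f := fun x hx ↦ by
      simpa using LinearMap.congr_fun hzero ⟨x, hx⟩
    let φ := (LinearMap.ker g').liftQ f hle ∘ₗ g'.quotKerEquivRange.symm.toLinearMap
    have hφ : Function.Surjective φ := fun x ↦ by
      obtain ⟨y, rfl⟩ := hf x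
      exact ⟨⟨g' y, LinearMap.mem_range_self g' y⟩, by simp [φ]⟩
    exact .inr <| (IsSubquotient.of_surjective φ hφ).map
      (Submodule.inclusion (LinearMap.range_comp_le_range _ _)) (Submodule.inclusion_injective _)

end Subquotient

section Isotypic

variable {A : Type*} [Ring A]

theorem IsIsotypicSubquot.of_forall_isSubquotient {N : Type*} {P : Type u} [AddCommGroup N]
    [Module A N] [AddCommGroup P] [Module A P] (hN : IsIsotypicSubquot A N)
    (h : ∀ (X : Type u) [AddCommGroup X] [Module A X], IsSimpleModule A X →
      IsSubquotient A P X → IsSubquotient A N X) :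
    IsIsotypicSubquot A P := by
  intro p₁ p₂ q₁ q₂ h₁ h₂
  obtain ⟨r₁, f₁, hf₁⟩ := h _ h₁ ⟨p₁, q₁.mkQ, q₁.mkQ_surjective⟩
  obtain ⟨r₂, f₂, hf₂⟩ := h _ h₂ ⟨p₂, q₂.mkQ, q₂.mkQ_surjective⟩
  let e₁ := f₁.quotKerEquivOfSurjective hf₁
  let e₂ := f₂.quotKerEquivOfSurjective hf₂
  obtain ⟨e⟩ := hN r₁ r₂ _ _ (IsSimpleModule.congr e₁) (IsSimpleModule.congr e₂)
  exact ⟨e₁.symm ≪≫ₗ e ≪≫ₗ e₂⟩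

theorem IsIsotypicSubquot.comap_mkQ_range {M : Type u} [AddCommGroup M] [Module A M]
    {N : Submodule A M} (hN : IsIsotypicSubquot A N) (f : N →ₗ[A] M ⧸ N) :
    IsIsotypicSubquot A ((LinearMap.range f).comap N.mkQ) := by
  set P := (LinearMap.range f).comap N.mkQ
  refine hN.of_forall_isSubquotient fun X _ _ _ hPX ↦ ?_
  let g := N.mkQ ∘ₗ P.subtype
  have hker : LinearMap.ker g = N.comap P.subtype := by
    rw [LinearMap.ker_comp, N.ker_mkQ]
  have hrange : LinearMap.range g = LinearMap.range f := by
    rw [LinearMap.range_comp, P.range_subtype,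
      Submodule.map_comap_eq_of_surjective N.mkQ_surjective]
  rcases hPX.ker_or_range g with hX | hX
  · rw [hker] at hX
    let e := Submodule.comapSubtypeEquivOfLe (N.le_comap_mkQ (LinearMap.range f))
    exact hX.map e.toLinearMap e.injective
  · let e := LinearEquiv.ofEq _ _ hrange
    exact (hX.map e.toLinearMap e.injective).comap f.rangeRestrict f.surjective_rangeRestrict

end Isotypic

/-- If `M` is a right `R`-module of finite length and `N ⊆ M` is an
isotypic submodule, then there is a submodule `N' ⊇ N` that is isotypic, maximal among the
isotypic submodules of `M`, and satisfies `Hom_R(N', M/N') = 0`. -/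
theorem exists_maximal_isotypic_submodule (R : Type u) [Ring R]
    (M : Type u) [AddCommGroup M] [Module Rᵐᵒᵖ M] (hfl : IsFiniteLength Rᵐᵒᵖ M)
    (N : Submodule Rᵐᵒᵖ M) (hN : IsIsotypicSubquot Rᵐᵒᵖ N) :
    ∃ N' : Submodule Rᵐᵒᵖ M, N ≤ N' ∧ IsIsotypicSubquot Rᵐᵒᵖ N' ∧
      (∀ P : Submodule Rᵐᵒᵖ M, IsIsotypicSubquot Rᵐᵒᵖ P → N' ≤ P → P = N') ∧
      (∀ f : N' →ₗ[Rᵐᵒᵖ] (M ⧸ N'), f = 0) := by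
  have := (isFiniteLength_iff_isNoetherian_isArtinian.mp hfl).1
  obtain ⟨N', hNN', hiso, hmax⟩ := exists_maximal_ge_of_wellFoundedGT
    (fun P : Submodule Rᵐᵒᵖ M ↦ IsIsotypicSubquot Rᵐᵒᵖ P) N hN
  refine ⟨N', hNN', hiso, fun P hP hle ↦ le_antisymm (hmax hP hle) hle, fun f ↦ ?_⟩
  have hle : (LinearMap.range f).comap N'.mkQ ≤ N' :=
    hmax (hiso.comap_mkQ_range f) (N'.le_comap_mkQ _)
  rwa [← LinearMap.range_eq_bot, eq_bot_iff,
    ← Submodule.comap_le_comap_iff_of_surjective N'.mkQ_surjective, Submodule.comap_bot,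
    N'.ker_mkQ]
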